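/- Let Σ₁ := {a, b, c, f}, Σ₂ := {b, c, e}, L₁ := { cⁿ } ∪ { cⁿ·a·cᵐ } ∪ { cⁿ·f } ∪ { cⁿ·f·b·cᵐ } (n, m ≥ 0) over Σ₁, L₂ := { cⁿ } ∪ { cⁿ·b } ∪ { cⁿ·b·e·cᵐ } (n, m ≥ 0) over Σ₂, and L := L₁ ∥ L₂ over Σ := {a, b, c, e, f} with observable events Σₒ := {c, e}; let M denote the projection onto Σₒ and M₁ the projection of strings over Σ₁ onto {c}. Then for every n ≥ 1 the string f·b·cⁿ ∈ L₁ changes its observation in L: every w ∈ L with P₁(w) = f·b·cⁿ satisfies M(w) ≠ M₁(f·b·cⁿ) = cⁿ (in fact M(w) contains an occurrence of e). In contrast, for every n ≥ 0 the string a·cⁿ ∈ L₁ does not change its observation in L: there exists w ∈ L with P₁(w) = a·cⁿ and M(w) = M₁(a·cⁿ) = cⁿ. -/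

import Mathlib

/-- The events of the paper's example. -/
inductive Ev : Type
  | a | b | c | e | f
deriving DecidableEq

/-- Natural projection: erase all events not in `S`. -/
def proj (S : Finset Ev) (s : List Ev) : List Ev :=
  s.filter (· ∈ S)

/-- Parallel composition of two languages over alphabets `S1` and `S2`. -/
def par (S1 S2 : Finset Ev) (L1 L2 : Set (List Ev)) : Set (List Ev) :=
  {s | (∀ x ∈ s, x ∈ S1 ∪ S2) ∧ proj S1 s ∈ L1 ∧ proj S2 s ∈ L2}

/-- The language of automaton `G₁` over `Σ₁ = {a,b,c,f}`:
`c* ∪ c*·a·c* ∪ c*·f ∪ c*·f·b·c*`. -/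
def L1 : Set (List Ev) :=
  {w | ∃ n, w = List.replicate n Ev.c} ∪
  {w | ∃ n m, w = List.replicate n Ev.c ++ Ev.a :: List.replicate m Ev.c} ∪
  {w | ∃ n, w = List.replicate n Ev.c ++ [Ev.f]} ∪
  {w | ∃ n m, w = List.replicate n Ev.c ++ Ev.f :: Ev.b :: List.replicate m Ev.c}

/-- The language of automaton `G₂` over `Σ₂ = {b,c,e}`:
`c* ∪ c*·b ∪ c*·b·e·c*`. -/
def L2 : Set (List Ev) :=
  {w | ∃ n, w = List.replicate n Ev.c} ∪
  {w | ∃ n, w = List.replicate n Ev.c ++ [Ev.b]} ∪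
  {w | ∃ n m, w = List.replicate n Ev.c ++ Ev.b :: Ev.e :: List.replicate m Ev.c}

/-- The global language `L := L₁ ∥ L₂`. -/
def L : Set (List Ev) :=
  par {Ev.a, Ev.b, Ev.c, Ev.f} {Ev.b, Ev.c, Ev.e} L1 L2

lemma proj_eq_self {S : Finset Ev} {s : List Ev} (h : ∀ x ∈ s, x ∈ S) : proj S s = s :=
  List.filter_eq_self.mpr fun x hx => decide_eq_true (h x hx)

lemma proj_replicate_c {S : Finset Ev} (hc : Ev.c ∈ S) (n : ℕ) :
    proj S (List.replicate n Ev.c) = List.replicate n Ev.c :=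
  proj_eq_self fun _ hx => List.eq_of_mem_replicate hx ▸ hc

lemma proj_cons_of_mem {S : Finset Ev} {x : Ev} (hx : x ∈ S) (s : List Ev) :
    proj S (x :: s) = x :: proj S s :=
  List.filter_cons_of_pos (decide_eq_true hx)

lemma proj_cons_of_notMem {S : Finset Ev} {x : Ev} (hx : x ∉ S) (s : List Ev) :
    proj S (x :: s) = proj S s :=
  List.filter_cons_of_neg (by simpa using hx)

lemma mem_proj {S : Finset Ev} {s : List Ev} {x : Ev} : x ∈ proj S s ↔ x ∈ s ∧ x ∈ S := by
  simp [proj]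

lemma cons_b_replicate_c_notMem_L2 {n : ℕ} (hn : 0 < n) :
    Ev.b :: List.replicate n Ev.c ∉ L2 := by
  obtain ⟨n, rfl⟩ := Nat.exists_eq_add_one_of_ne_zero hn.ne'
  rintro ((⟨k, hk⟩ | ⟨k, hk⟩) | ⟨k, m, hk⟩) <;> cases k <;> simp [List.replicate_succ] at hk

/-- Without an `e`, the string lies over `Σ₁` and so equals its `Σ₁`-part `f·b·cⁿ`, whose
`Σ₂`-part `b·cⁿ` is not in `L₂`: `G₂` lets `c` follow `b` only after `e`. -/
lemma e_mem_of_mem_L_of_proj_eq {w : List Ev} (hw : w ∈ L) {n : ℕ} (hn : 0 < n)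
    (hP₁ : proj {Ev.a, Ev.b, Ev.c, Ev.f} w = Ev.f :: Ev.b :: List.replicate n Ev.c) :
    Ev.e ∈ w := by
  obtain ⟨hsub, -, hP₂⟩ := hw
  by_contra he
  have hw₁ : proj {Ev.a, Ev.b, Ev.c, Ev.f} w = w :=
    proj_eq_self fun x hx => by cases x <;> simp_all
  rw [hw₁] at hP₁
  subst hP₁
  apply cons_b_replicate_c_notMem_L2 hn
  rwa [proj_cons_of_notMem (by simp), proj_cons_of_mem (by simp),
    proj_replicate_c (by simp)] at hP₂

lemma cons_a_replicate_c_mem_L (n : ℕ) : Ev.a :: List.replicate n Ev.c ∈ L := by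
  refine ⟨by simp, ?_, ?_⟩
  · rw [proj_eq_self (by simp)]
    exact Or.inl (Or.inl (Or.inr ⟨0, n, rfl⟩))
  · rw [proj_cons_of_notMem (by simp), proj_replicate_c (by simp)]
    exact Or.inl (Or.inl ⟨n, rfl⟩)

/-- The module `G₂` changes the observation of the faulty strings `f·b·cⁿ`
(`n ≥ 1`) of `G₁` in the composition: every `w ∈ L` with `P₁(w) = f·b·cⁿ`
satisfies `M(w) ≠ M₁(f·b·cⁿ) = cⁿ` (in fact `M(w)` contains `e`); whereas no
string `a·cⁿ` changes its observation: some `w ∈ L` with `P₁(w) = a·cⁿ` has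
`M(w) = M₁(a·cⁿ) = cⁿ`. Here `M` projects onto `{c, e}` and `M₁` onto
`{c}`. -/
theorem stmt10 :
    (∀ n : ℕ, 1 ≤ n →
      proj {Ev.c} (Ev.f :: Ev.b :: List.replicate n Ev.c) =
        List.replicate n Ev.c ∧
      ∀ w ∈ L,
        proj {Ev.a, Ev.b, Ev.c, Ev.f} w =
            Ev.f :: Ev.b :: List.replicate n Ev.c →
          proj {Ev.c, Ev.e} w ≠ List.replicate n Ev.c ∧
          Ev.e ∈ proj {Ev.c, Ev.e} w) ∧
    (∀ n : ℕ,
      proj {Ev.c} (Ev.a :: List.replicate n Ev.c) = List.replicate n Ev.c ∧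
      ∃ w ∈ L,
        proj {Ev.a, Ev.b, Ev.c, Ev.f} w = Ev.a :: List.replicate n Ev.c ∧
        proj {Ev.c, Ev.e} w = List.replicate n Ev.c) := by
  have hM₁ (x : Ev) (hx : x ≠ Ev.c) (n : ℕ) :
      proj {Ev.c} (x :: List.replicate n Ev.c) = List.replicate n Ev.c := by
    rw [proj_cons_of_notMem (by simpa using hx), proj_replicate_c (by simp)]
  refine ⟨fun n hn => ⟨?_, fun w hw hP₁ => ?_⟩, fun n => ⟨hM₁ _ (by simp) n, _,
    cons_a_replicate_c_mem_L n, ?_, ?_⟩⟩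
  · rw [proj_cons_of_notMem (by simp), hM₁ _ (by simp)]
  · have he : Ev.e ∈ proj {Ev.c, Ev.e} w :=
      mem_proj.2 ⟨e_mem_of_mem_L_of_proj_eq hw hn hP₁, by simp⟩
    refine ⟨fun h => ?_, he⟩
    simp [h] at he
  · exact proj_eq_self (by simp)
  · rw [proj_cons_of_notMem (by simp), proj_replicate_c (by simp)]
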